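/- Let A = R[x,y]/(xy - t^l) with l even, and let i = j = i' = j' = l/2 > 0. The map E_{i,i} ⊗_A E_{i,i} → A defined on generators by ζ₁⊗ξ₁ ↦ x, ζ₁⊗ξ₂ ↦ t^{l/2}, ζ₂⊗ξ₁ ↦ t^{l/2}, ζ₂⊗ξ₂ ↦ y is a well-defined A-module homomorphism. -/

import Mathlib

/-! The pairing is the symmetric bilinear form on `A²` with Gram matrix `!![x, t^m; t^m, y]`.
Its determinant `xy - t^(2m)` vanishes in `A`, and the defining relations of `E_{m,m}` are, up
to sign, the columns of the adjugate of this matrix, so the form kills them on either side and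
descends to `E_{m,m} ⊗ E_{m,m}`. -/

set_option synthInstance.maxHeartbeats 1000000
set_option maxHeartbeats 1000000

open MvPolynomial TensorProduct

namespace stmt13

variable (R : Type*) [CommRing R] (t : R) (l : ℕ)

/-- `A = R[x,y]/(xy - t^l)`, with `x = X 0`, `y = X 1`. -/
noncomputable abbrev A := MvPolynomial (Fin 2) R ⧸
  Ideal.span {(X 0 * X 1 - C (t ^ l) : MvPolynomial (Fin 2) R)}

noncomputable def x : A R t l := Ideal.Quotient.mk _ (X 0)
noncomputable def y : A R t l := Ideal.Quotient.mk _ (X 1)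
noncomputable def tA : A R t l := Ideal.Quotient.mk _ (C t)

/-- `E a b` is the `A`-module with two generators and relations
`t^b·(first) = x·(second)` and `t^a·(second) = y·(first)`. -/
noncomputable def E (a b : ℕ) :=
  (A R t l × A R t l) ⧸
    (Submodule.span (A R t l) {((tA R t l ^ b, -(x R t l)) : A R t l × A R t l),
      ((y R t l, -(tA R t l ^ a)) : A R t l × A R t l)})

noncomputable instance (a b : ℕ) : AddCommGroup (E R t l a b) :=
  Submodule.Quotient.addCommGroup _

noncomputable instance (a b : ℕ) : Module (A R t l) (E R t l a b) :=
  Submodule.Quotient.module _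

noncomputable def gen₁ (a b : ℕ) : E R t l a b := Submodule.Quotient.mk (1, 0)
noncomputable def gen₂ (a b : ℕ) : E R t l a b := Submodule.Quotient.mk (0, 1)

lemma x_mul_y : x R t l * y R t l = tA R t l ^ l := by
  rw [← sub_eq_zero, x, y, tA, ← map_pow, ← map_mul, ← map_sub, ← C_pow,
    Ideal.Quotient.eq_zero_iff_mem]
  exact Ideal.subset_span rfl

section GramForm

variable {S : Type*} [CommRing S] (a b d : S)

def gramForm : (S × S) →ₗ[S] (S × S) →ₗ[S] S :=
  LinearMap.mk₂ S (fun p q => p.1 * q.1 * a + p.1 * q.2 * b + p.2 * q.1 * b + p.2 * q.2 * d)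
    (fun _ _ _ => by dsimp only [Prod.fst_add, Prod.snd_add]; ring)
    (fun _ _ _ => by dsimp only [Prod.smul_fst, Prod.smul_snd, smul_eq_mul]; ring)
    (fun _ _ _ => by dsimp only [Prod.fst_add, Prod.snd_add]; ring)
    (fun _ _ _ => by dsimp only [Prod.smul_fst, Prod.smul_snd, smul_eq_mul]; ring)

@[simp]
lemma gramForm_apply (p q : S × S) :
    gramForm a b d p q = p.1 * q.1 * a + p.1 * q.2 * b + p.2 * q.1 * b + p.2 * q.2 * d :=
  rfl

lemma gramForm_flip : (gramForm a b d).flip = gramForm a b d := by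
  refine LinearMap.ext₂ fun p q => ?_
  simp only [LinearMap.flip_apply, gramForm_apply]
  ring

lemma span_le_ker_gramForm (h : a * d = b ^ 2) :
    Submodule.span S {(b, -a), (d, -b)} ≤ LinearMap.ker (gramForm a b d) := by
  rw [Submodule.span_le]
  rintro _ (rfl | rfl) <;> refine LinearMap.ext fun q => ?_ <;>
    simp only [gramForm_apply, LinearMap.zero_apply]
  · linear_combination (-q.2) * h
  · linear_combination q.1 * h

end GramForm

/-- for `l` even and `i = l/2 > 0`, the assignment `ζ₁⊗ξ₁ ↦ x`,
`ζ₁⊗ξ₂ ↦ t^{l/2}`, `ζ₂⊗ξ₁ ↦ t^{l/2}`, `ζ₂⊗ξ₂ ↦ y` is a well-defined `A`-module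
homomorphism `E_{l/2,l/2} ⊗_A E_{l/2,l/2} → A` (the free module `E_{0,0} = A`). -/
theorem stmt13 (m : ℕ) (hlm : l = 2 * m) :
    ∃ f : (E R t l m m) ⊗[A R t l] (E R t l m m) →ₗ[A R t l] A R t l,
      f (gen₁ R t l m m ⊗ₜ gen₁ R t l m m) = x R t l ∧
      f (gen₁ R t l m m ⊗ₜ gen₂ R t l m m) = tA R t l ^ m ∧
      f (gen₂ R t l m m ⊗ₜ gen₁ R t l m m) = tA R t l ^ m ∧
      f (gen₂ R t l m m ⊗ₜ gen₂ R t l m m) = y R t l := by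
  have hdet : x R t l * y R t l = (tA R t l ^ m) ^ 2 := by
    rw [x_mul_y, ← pow_mul, hlm, mul_comm]
  let G := gramForm (x R t l) (tA R t l ^ m) (y R t l)
  have hker : Submodule.span _ _ ≤ LinearMap.ker G := span_le_ker_gramForm _ _ _ hdet
  refine ⟨lift (LinearMap.liftQ₂ _ _ G hker (by rwa [gramForm_flip])), ?_, ?_, ?_, ?_⟩
  · show G (1, 0) (1, 0) = _; simp [G]
  · show G (1, 0) (0, 1) = _; simp [G]
  · show G (0, 1) (1, 0) = _; simp [G]
  · show G (0, 1) (0, 1) = _; simp [G]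

end stmt13
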